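/- arXiv:2010.00385 — 3 statements merged into one kernel-verified Lean document; each statement's English description precedes it below -/
import Mathlib

section
/- Feasibility of insertion (Lemma: Feasibility of an Insertion): Let A be a time-feasible tour, ã a new customer with assigned window w_ℓ to be inserted between a_i and a_{i+1}. Define α_ã := max{s_{w_ℓ}, α_{a_i} + s(a_i) + t(a_i, ã)} and β_ã := min{e_{w_ℓ}, β_{a_{i+1}} − s(ã) − t(ã, a_{i+1})}. If α_ã ≤ β_ã, then the tour A +_i ã (obtained by inserting ã after position i) is time-feasible. -/
/-!
Up to position `i` the tour `A +_i ã` coincides with `A`, so its earliest arrival times are those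
of `A` there, and at `ã` it arrives at `α̃ ≤ β̃`. From `ã` on, compare the earliest arrival times of
the new tour with its latest arrival times, which are `β̃` at `ã` and the latest arrival times of
`A` shifted by one position after it: the domination `earliest ≤ latest` propagates forward along
the tour, because `A` being feasible gives `α ≤ β` and hence `s_w ≤ β` at each of its customers.
Latest arrival times never exceed the window ends and the last one is the tour end time.
-/

/-- The tour obtained from `a` by inserting the new customer `x` between
positions `i` and `i+1`. -/
def insertAt {Loc : Type} (a : ℕ → Loc) (x : Loc) (i : ℕ) : ℕ → Loc :=
  fun j => if j ≤ i then a j else if j = i + 1 then x else a (j - 1)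

theorem exists_succ_of_succ_lt {i k : ℕ} (h : i + 1 < k) : ∃ m, i < m ∧ k = m + 1 :=
  ⟨k - 1, by omega, by omega⟩

section Insertion

variable {Loc : Type} {a : ℕ → Loc} {x : Loc} {i : ℕ}

theorem insertAt_of_le {j : ℕ} (h : j ≤ i) : insertAt a x i j = a j := by
  simp [insertAt, h]

theorem insertAt_succ_self : insertAt a x i (i + 1) = x := by
  simp [insertAt]

theorem insertAt_succ_of_lt {m : ℕ} (h : i < m) : insertAt a x i (m + 1) = a m := by
  simp [insertAt, show ¬m + 1 ≤ i by omega, show m ≠ i by omega]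

end Insertion

section ArrivalTimes

variable {Loc : Type} {wS wE s : Loc → ℝ} {t : Loc → Loc → ℝ}

theorem arrival_eq_of_eqOn_prefix {a b : ℕ → Loc} {α α' : ℕ → ℝ} {i : ℕ}
    (h0 : α' 0 = α 0) (hab : ∀ j ≤ i, b j = a j)
    (hα : ∀ j < i, α (j + 1) = max (wS (a (j + 1))) (α j + s (a j) + t (a j) (a (j + 1))))
    (hα' : ∀ j < i, α' (j + 1) = max (wS (b (j + 1))) (α' j + s (b j) + t (b j) (b (j + 1)))) :
    ∀ j ≤ i, α' j = α j := by
  intro j hj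
  induction j with
  | zero => exact h0
  | succ j ih =>
    rw [hα' j hj, hα j hj, hab j (by omega), hab (j + 1) hj, ih (by omega)]

theorem arrival_le_latest {a : ℕ → Loc} {α β : ℕ → ℝ} {n : ℕ}
    (hα : ∀ j ≤ n, α j + s (a j) + t (a j) (a (j + 1)) ≤ α (j + 1))
    (hβ : ∀ j, 1 ≤ j → j ≤ n → β j = min (wE (a j)) (β (j + 1) - s (a j) - t (a j) (a (j + 1))))
    (hwE : ∀ j, 1 ≤ j → j ≤ n → α j ≤ wE (a j)) (hend : α (n + 1) ≤ β (n + 1)) :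
    ∀ j, 1 ≤ j → j ≤ n + 1 → α j ≤ β j := by
  intro j hj1 hj
  induction hj using Nat.decreasingInduction with
  | self => exact hend
  | of_succ k hk ih =>
    rw [hβ k hj1 (by omega)]
    exact le_min (hwE k hj1 (by omega))
      (by linarith [ih (by omega), hα k (by omega)])

theorem arrival_le_of_le_latest {b : ℕ → Loc} {γ δ : ℕ → ℝ} {m N : ℕ} (hm : γ m ≤ δ m)
    (hγ : ∀ k, m ≤ k → k < N →
      γ (k + 1) = max (wS (b (k + 1))) (γ k + s (b k) + t (b k) (b (k + 1))))
    (hδ : ∀ k, m ≤ k → k < N → δ k + s (b k) + t (b k) (b (k + 1)) ≤ δ (k + 1))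
    (hwS : ∀ k, m < k → k ≤ N → wS (b k) ≤ δ k) :
    ∀ k, m ≤ k → k ≤ N → γ k ≤ δ k := by
  intro k hk
  induction k, hk using Nat.le_induction with
  | base => exact fun _ => hm
  | succ k hmk ih =>
    intro hk
    rw [hγ k hmk hk]
    exact max_le (hwS (k + 1) (by omega) hk) (by linarith [ih (by omega), hδ k hmk hk])

end ArrivalTimes

/-- The latest arrival times of `insertAt a x i` from position `i + 1` on, given the latest
arrival times `β` of `a`: `β̃` at the new customer, then `β` shifted by one position. -/
def insertLatest {Loc : Type} (wE s : Loc → ℝ) (t : Loc → Loc → ℝ) (a : ℕ → Loc) (x : Loc)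
    (i : ℕ) (β : ℕ → ℝ) : ℕ → ℝ :=
  fun k => if k = i + 1 then min (wE x) (β (i + 1) - s x - t x (a (i + 1))) else β (k - 1)

section InsertLatest

variable {Loc : Type} {wS wE s : Loc → ℝ} {t : Loc → Loc → ℝ} {a : ℕ → Loc} {x : Loc}
  {i n : ℕ} {β : ℕ → ℝ}

theorem insertLatest_succ_self :
    insertLatest wE s t a x i β (i + 1) = min (wE x) (β (i + 1) - s x - t x (a (i + 1))) := by
  simp [insertLatest]

theorem insertLatest_succ_of_lt {m : ℕ} (h : i < m) :
    insertLatest wE s t a x i β (m + 1) = β m := by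
  simp [insertLatest, show m ≠ i by omega]

theorem wS_le_insertLatest (hwS : ∀ j, 1 ≤ j → j ≤ n → wS (a j) ≤ β j) {k : ℕ}
    (hik : i + 1 < k) (hkn : k ≤ n + 1) :
    wS (insertAt a x i k) ≤ insertLatest wE s t a x i β k := by
  obtain ⟨m, him, rfl⟩ := exists_succ_of_succ_lt hik
  rw [insertLatest_succ_of_lt him, insertAt_succ_of_lt him]
  exact hwS m (by omega) (by omega)

theorem insertLatest_add_le
    (hβ : ∀ j, 1 ≤ j → j ≤ n → β j = min (wE (a j)) (β (j + 1) - s (a j) - t (a j) (a (j + 1))))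
    {k : ℕ} (hik : i + 1 ≤ k) (hkn : k ≤ n + 1) :
    insertLatest wE s t a x i β k + s (insertAt a x i k) +
      t (insertAt a x i k) (insertAt a x i (k + 1)) ≤ insertLatest wE s t a x i β (k + 1) := by
  rcases hik.eq_or_lt with rfl | hlt
  · rw [insertLatest_succ_self, insertAt_succ_self, insertAt_succ_of_lt (lt_add_one i),
      insertLatest_succ_of_lt (lt_add_one i)]
    linarith [min_le_right (wE x) (β (i + 1) - s x - t x (a (i + 1)))]
  · obtain ⟨m, him, rfl⟩ := exists_succ_of_succ_lt hlt
    rw [insertLatest_succ_of_lt him, insertAt_succ_of_lt him, insertAt_succ_of_lt (by omega),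
      insertLatest_succ_of_lt (by omega), hβ m (by omega) (by omega)]
    linarith [min_le_right (wE (a m)) (β (m + 1) - s (a m) - t (a m) (a (m + 1)))]

theorem insertLatest_le_wE
    (hβ : ∀ j, 1 ≤ j → j ≤ n → β j = min (wE (a j)) (β (j + 1) - s (a j) - t (a j) (a (j + 1))))
    {k : ℕ} (hik : i + 1 ≤ k) (hkn : k ≤ n + 1) :
    insertLatest wE s t a x i β k ≤ wE (insertAt a x i k) := by
  rcases hik.eq_or_lt with rfl | hlt
  · rw [insertLatest_succ_self, insertAt_succ_self]
    exact min_le_left _ _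
  · obtain ⟨m, him, rfl⟩ := exists_succ_of_succ_lt hlt
    rw [insertLatest_succ_of_lt him, insertAt_succ_of_lt him, hβ m (by omega) (by omega)]
    exact min_le_left _ _

end InsertLatest

theorem insertion_feasibility_general
    {Loc : Type} (n : ℕ) (a : ℕ → Loc) (x : Loc)
    (wS wE : Loc → ℝ) (s : Loc → ℝ) (t : Loc → Loc → ℝ)
    (start endT : ℝ) (α β : ℕ → ℝ) (i : ℕ) (hi : i ≤ n)
    -- earliest arrival times of A
    (hα0 : α 0 = start)
    (hαrec : ∀ j, j + 1 ≤ n →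
      α (j + 1) = max (wS (a (j + 1))) (α j + s (a j) + t (a j) (a (j + 1))))
    (hαend : α (n + 1) = α n + s (a n) + t (a n) (a (n + 1)))
    -- latest arrival times of A
    (hβend : β (n + 1) = endT)
    (hβrec : ∀ j, 1 ≤ j → j ≤ n →
      β j = min (wE (a j)) (β (j + 1) - s (a j) - t (a j) (a (j + 1))))
    -- time-feasibility of A
    (hfeas : ∀ j, 1 ≤ j → j ≤ n → wS (a j) ≤ α j ∧ α j ≤ wE (a j))
    (hret : α (n + 1) ≤ endT)
    -- the insertion condition α̃ ≤ β̃
    (hins : max (wS x) (α i + s (a i) + t (a i) x)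
      ≤ min (wE x) (β (i + 1) - s x - t x (a (i + 1)))) :
    -- then A +_i x is time-feasible:
    ∀ α' : ℕ → ℝ,
      α' 0 = start →
      (∀ j, j + 1 ≤ n + 1 →
        α' (j + 1) = max (wS (insertAt a x i (j + 1)))
          (α' j + s (insertAt a x i j) + t (insertAt a x i j) (insertAt a x i (j + 1)))) →
      α' (n + 2) = α' (n + 1) + s (insertAt a x i (n + 1)) +
        t (insertAt a x i (n + 1)) (insertAt a x i (n + 2)) →
      (∀ k, 1 ≤ k → k ≤ n + 1 →
        wS (insertAt a x i k) ≤ α' k ∧ α' k ≤ wE (insertAt a x i k)) ∧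
      α' (n + 2) ≤ endT := by
  intro α' hα'0 hα'rec hα'end
  have hαstep : ∀ j ≤ n, α j + s (a j) + t (a j) (a (j + 1)) ≤ α (j + 1) := fun j hj => by
    rcases hj.lt_or_eq with hj | rfl
    · exact (hαrec j hj).ge.trans' (le_max_right _ _)
    · exact hαend.ge
  have hαβ := arrival_le_latest hαstep hβrec (fun j h1 h2 => (hfeas j h1 h2).2) (hβend ▸ hret)
  have hprefix := arrival_eq_of_eqOn_prefix (hα'0.trans hα0.symm) (fun _ => insertAt_of_le)
    (fun j hj => hαrec j (by omega)) (fun j hj => hα'rec j (by omega))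
  have hnew : α' (i + 1) ≤ insertLatest wE s t a x i β (i + 1) := by
    rwa [hα'rec i (by omega), insertAt_succ_self, insertAt_of_le le_rfl, hprefix i le_rfl,
      insertLatest_succ_self]
  have hdom := arrival_le_of_le_latest hnew (fun k _ hk => hα'rec k (by omega))
    (fun k hik hk => insertLatest_add_le hβrec hik (by omega))
    (fun k => wS_le_insertLatest fun j h1 h2 => (hfeas j h1 h2).1.trans (hαβ j h1 (by omega)))
  refine ⟨fun k hk1 hk => ⟨?_, ?_⟩, ?_⟩
  · obtain ⟨j, rfl⟩ := Nat.exists_eq_add_of_le' hk1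
    exact (hα'rec j hk).ge.trans' (le_max_left _ _)
  · rcases le_or_gt k i with hki | hik
    · rw [insertAt_of_le hki, hprefix k hki]
      exact (hfeas k hk1 (by omega)).2
    · exact (hdom k hik hk).trans (insertLatest_le_wE hβrec hik hk)
  · have hlast : insertLatest wE s t a x i β (n + 2) = endT :=
      (insertLatest_succ_of_lt (by omega)).trans hβend
    linarith [hα'end, hdom (n + 1) (by omega) le_rfl,
      insertLatest_add_le (x := x) hβrec (show i + 1 ≤ n + 1 by omega) le_rfl]

/-- Feasibility of an insertion (Lemma "Feasibility of an Insertion"):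
if `α̃ := max{s_{w_ℓ}, α_{a_i} + s(a_i) + t(a_i, ã)}` and
`β̃ := min{e_{w_ℓ}, β_{a_{i+1}} − s(ã) − t(ã, a_{i+1})}` satisfy `α̃ ≤ β̃`, then
the tour `A +_i ã` is time-feasible.  Here the tour is `a 0, …, a (n+1)` (`a 0`
and `a (n+1)` being the depot), `wS c`/`wE c` are the start/end of the time
window assigned to location `c` (with `wS x = s_{w_ℓ}`, `wE x = e_{w_ℓ}`),
`s` the service times, `t` the travel times, and `α`, `β` the earliest/latest
arrival times of the (time-feasible) tour `A`. -/
theorem insertion_feasibility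
    {Loc : Type} (n : ℕ) (a : ℕ → Loc) (x : Loc)
    (wS wE : Loc → ℝ) (s : Loc → ℝ) (t : Loc → Loc → ℝ)
    (start endT : ℝ) (α β : ℕ → ℝ) (i : ℕ) (hi : i ≤ n)
    (hs : ∀ c, 0 ≤ s c) (ht : ∀ c d, 0 ≤ t c d)
    -- earliest arrival times of A
    (hα0 : α 0 = start)
    (hαrec : ∀ j, j + 1 ≤ n →
      α (j + 1) = max (wS (a (j + 1))) (α j + s (a j) + t (a j) (a (j + 1))))
    (hαend : α (n + 1) = α n + s (a n) + t (a n) (a (n + 1)))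
    -- latest arrival times of A
    (hβend : β (n + 1) = endT)
    (hβrec : ∀ j, 1 ≤ j → j ≤ n →
      β j = min (wE (a j)) (β (j + 1) - s (a j) - t (a j) (a (j + 1))))
    (hβ0 : β 0 = β 1 - t (a 0) (a 1))
    -- time-feasibility of A
    (hfeas : ∀ j, 1 ≤ j → j ≤ n → wS (a j) ≤ α j ∧ α j ≤ wE (a j))
    (hret : α (n + 1) ≤ endT)
    -- the insertion condition α̃ ≤ β̃
    (hins : max (wS x) (α i + s (a i) + t (a i) x)
      ≤ min (wE x) (β (i + 1) - s x - t x (a (i + 1)))) :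
    -- then A +_i x is time-feasible:
    ∀ α' : ℕ → ℝ,
      α' 0 = start →
      (∀ j, j + 1 ≤ n + 1 →
        α' (j + 1) = max (wS (insertAt a x i (j + 1)))
          (α' j + s (insertAt a x i j) + t (insertAt a x i j) (insertAt a x i (j + 1)))) →
      α' (n + 2) = α' (n + 1) + s (insertAt a x i (n + 1)) +
        t (insertAt a x i (n + 1)) (insertAt a x i (n + 2)) →
      (∀ k, 1 ≤ k → k ≤ n + 1 →
        wS (insertAt a x i k) ≤ α' k ∧ α' k ≤ wE (insertAt a x i k)) ∧
      α' (n + 2) ≤ endT :=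
  insertion_feasibility_general n a x wS wE s t start endT α β i hi hα0 hαrec hαend hβend hβrec
    hfeas hret hins
end

section
/- If the set of time windows is non-overlapping and at least one customer on tour A is inside window w_ℓ, then every feasible insertion position for a new customer assigned to w_ℓ lies in the set {f(w_ℓ) − 1, …, l(w_ℓ)}, where f(w_ℓ) and l(w_ℓ) are the first and last indices of customers on A whose assigned windows are contained in w_ℓ. -/
/-- With non-overlapping time windows and at least one customer of the tour
inside window `w_ℓ = [swl, ewl]`, every feasible insertion position for a new
customer `x` assigned to `w_ℓ` lies in `{f(w_ℓ) − 1, …, l(w_ℓ)}`, where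
`f(w_ℓ)`/`l(w_ℓ)` are the first/last indices of customers on the tour whose
assigned windows are contained in `w_ℓ`.  Insertion after position `i` is
feasible iff `max{s_{w_ℓ}, α_{a_i}+s(a_i)+t(a_i,x)} ≤
min{e_{w_ℓ}, β_{a_{i+1}} − s(x) − t(x, a_{i+1})}`. -/
theorem feasible_insertion_positions_within_block
    {Loc : Type} (n : ℕ) (a : ℕ → Loc) (x : Loc)
    (wS wE : Loc → ℝ) (swl ewl : ℝ) (s : Loc → ℝ) (t : Loc → Loc → ℝ)
    (start endT : ℝ) (α β : ℕ → ℝ) (f l : ℕ)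
    (hs : ∀ c, 0 < s c) (ht : ∀ c d, 0 ≤ t c d)
    (hwin : ∀ c, wS c ≤ wE c) (hwl : swl < ewl)
    -- the set of time windows is non-overlapping (pairwise identical or disjoint)
    (hnov₁ : ∀ i j, 1 ≤ i → i ≤ n → 1 ≤ j → j ≤ n →
      (wS (a i) = wS (a j) ∧ wE (a i) = wE (a j)) ∨
      wE (a i) ≤ wS (a j) ∨ wE (a j) ≤ wS (a i))
    (hnov₂ : ∀ i, 1 ≤ i → i ≤ n →
      (wS (a i) = swl ∧ wE (a i) = ewl) ∨ wE (a i) ≤ swl ∨ ewl ≤ wS (a i))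
    -- f and l are the first/last indices of customers inside w_ℓ (nonempty block)
    (hf : IsLeast {i | 1 ≤ i ∧ i ≤ n ∧ swl ≤ wS (a i) ∧ wE (a i) ≤ ewl} f)
    (hl : IsGreatest {i | 1 ≤ i ∧ i ≤ n ∧ swl ≤ wS (a i) ∧ wE (a i) ≤ ewl} l)
    -- earliest arrival times of A
    (hα0 : α 0 = start)
    (hαrec : ∀ j, j + 1 ≤ n →
      α (j + 1) = max (wS (a (j + 1))) (α j + s (a j) + t (a j) (a (j + 1))))
    (hαend : α (n + 1) = α n + s (a n) + t (a n) (a (n + 1)))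
    -- latest arrival times of A
    (hβend : β (n + 1) = endT)
    (hβrec : ∀ j, 1 ≤ j → j ≤ n →
      β j = min (wE (a j)) (β (j + 1) - s (a j) - t (a j) (a (j + 1))))
    (hβ0 : β 0 = β 1 - t (a 0) (a 1))
    -- time-feasibility of A
    (hfeas : ∀ j, 1 ≤ j → j ≤ n → wS (a j) ≤ α j ∧ α j ≤ wE (a j))
    (hret : α (n + 1) ≤ endT) :
    ∀ i, i ≤ n →
      max swl (α i + s (a i) + t (a i) x)
        ≤ min ewl (β (i + 1) - s x - t x (a (i + 1))) →
      f - 1 ≤ i ∧ i ≤ l := by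
  intro i hi hins
  have h1 : α i + s (a i) + t (a i) x ≤ ewl :=
    (le_max_right _ _).trans (hins.trans (min_le_left _ _))
  have h2 : swl ≤ β (i + 1) - s x - t x (a (i + 1)) :=
    (le_max_left _ _).trans (hins.trans (min_le_right _ _))
  obtain ⟨⟨hf1, hfn, hfS, hfE⟩, hfle⟩ := hf
  obtain ⟨⟨hl1, hln, hlS, hlE⟩, hlge⟩ := hl
  have hstep : ∀ j, j + 1 ≤ n → α j < α (j + 1) := by
    intro j hj
    have h := hαrec j hj
    have h2' : α j + s (a j) + t (a j) (a (j + 1)) ≤ α (j + 1) :=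
      h ▸ le_max_right _ _
    have := hs (a j)
    have := ht (a j) (a (j + 1))
    linarith
  have hmono : ∀ j k, j < k → k ≤ n → α j < α k := by
    intro j k hjk hk
    induction k with
    | zero => omega
    | succ m ih =>
      rcases Nat.lt_succ_iff_lt_or_eq.mp hjk with h | h
      · exact lt_trans (ih h (by omega)) (hstep m hk)
      · subst h; exact hstep j hk
  have hfl : f ≤ l := hlge ⟨hf1, hfn, hfS, hfE⟩
  constructor
  · -- f - 1 ≤ i
    by_contra hcon
    push_neg at hcon
    have hi1f : i + 1 < f := by omega
    have hi1n : i + 1 ≤ n := by omega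
    rcases hnov₂ (i + 1) (by omega) hi1n with heq | hbefore | hafter
    · have : f ≤ i + 1 := hfle ⟨by omega, hi1n, heq.1.ge, heq.2.le⟩
      omega
    · -- wE (a (i+1)) ≤ swl
      have hβle : β (i + 1) ≤ wE (a (i + 1)) := by
        rw [hβrec (i + 1) (by omega) hi1n]; exact min_le_left _ _
      have := hs x
      have := ht x (a (i + 1))
      linarith
    · -- ewl ≤ wS (a (i+1))
      have hαge : wS (a (i + 1)) ≤ α (i + 1) := (hfeas (i + 1) (by omega) hi1n).1
      have hαlt : α (i + 1) < α f := hmono (i + 1) f hi1f hfn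
      have hαf : α f ≤ wE (a f) := (hfeas f hf1 hfn).2
      linarith
  · -- i ≤ l
    by_contra hcon
    push_neg at hcon
    have hi1 : 1 ≤ i := by omega
    rcases hnov₂ i hi1 hi with heq | hbefore | hafter
    · have : i ≤ l := hlge ⟨hi1, hi, heq.1.ge, heq.2.le⟩
      omega
    · -- wE (a i) ≤ swl
      have hαi : α i ≤ wE (a i) := (hfeas i hi1 hi).2
      have hαl : wS (a l) ≤ α l := (hfeas l hl1 hln).1
      have hlt : α l < α i := hmono l i (by omega) hi
      linarith
    · -- ewl ≤ wS (a i)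
      have hαi : wS (a i) ≤ α i := (hfeas i hi1 hi).1
      have := hs (a i)
      have := ht (a i) x
      linarith
end

section
/- In case of non-overlapping time windows, the inside of window w_ℓ on tour A consists exactly of the customers assigned to w_ℓ: in(w_ℓ, A) = {a_i ∈ A : w(a_i) = w_ℓ}. -/
/-- With non-overlapping time windows (and a time-feasible tour), the inside of
window `w_ℓ = [swl, ewl]` on the tour consists exactly of the customers assigned
to `w_ℓ`: a customer index `i ∈ [1, n]` satisfies `f(w_ℓ) ≤ i ≤ l(w_ℓ)` iff its
assigned window is `w_ℓ`.  Here `wS`, `wE` give the start/end of the window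
assigned to each location, and `f`/`l` are the first/last indices of customers
whose assigned window is contained in `w_ℓ`. -/
theorem inside_eq_assigned_of_nonoverlapping
    {Loc : Type} (n : ℕ) (a : ℕ → Loc)
    (wS wE : Loc → ℝ) (swl ewl : ℝ) (s : Loc → ℝ) (t : Loc → Loc → ℝ)
    (start : ℝ) (α : ℕ → ℝ) (f l : ℕ)
    (hs : ∀ c, 0 < s c) (ht : ∀ c d, 0 ≤ t c d)
    -- all windows have positive length
    (hwin : ∀ i, 1 ≤ i → i ≤ n → wS (a i) < wE (a i)) (hwl : swl < ewl)
    -- the set of time windows is non-overlapping (pairwise identical or disjoint)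
    (hnov₁ : ∀ i j, 1 ≤ i → i ≤ n → 1 ≤ j → j ≤ n →
      (wS (a i) = wS (a j) ∧ wE (a i) = wE (a j)) ∨
      wE (a i) ≤ wS (a j) ∨ wE (a j) ≤ wS (a i))
    (hnov₂ : ∀ i, 1 ≤ i → i ≤ n →
      (wS (a i) = swl ∧ wE (a i) = ewl) ∨ wE (a i) ≤ swl ∨ ewl ≤ wS (a i))
    -- f and l are the first/last indices of customers inside w_ℓ (nonempty block)
    (hf : IsLeast {i | 1 ≤ i ∧ i ≤ n ∧ swl ≤ wS (a i) ∧ wE (a i) ≤ ewl} f)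
    (hl : IsGreatest {i | 1 ≤ i ∧ i ≤ n ∧ swl ≤ wS (a i) ∧ wE (a i) ≤ ewl} l)
    -- earliest arrival times and time-feasibility of the tour
    (hα0 : α 0 = start)
    (hαrec : ∀ j, j + 1 ≤ n →
      α (j + 1) = max (wS (a (j + 1))) (α j + s (a j) + t (a j) (a (j + 1))))
    (hfeas : ∀ j, 1 ≤ j → j ≤ n → wS (a j) ≤ α j ∧ α j ≤ wE (a j)) :
    ∀ i, 1 ≤ i → i ≤ n →
      ((f ≤ i ∧ i ≤ l) ↔ (wS (a i) = swl ∧ wE (a i) = ewl)) := by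
  intro i hi1 hin
  obtain ⟨⟨hf1, hfn, hfS, hfE⟩, hfmin⟩ := hf
  obtain ⟨⟨hl1, hln, hlS, hlE⟩, hlmax⟩ := hl
  have hmono : ∀ k, k ≤ n → ∀ j, j < k → α j < α k := by
    intro k
    induction k with
    | zero => intro _ j hj; omega
    | succ m ih =>
      intro hkn j hj
      have h1 : α m + s (a m) + t (a m) (a (m+1)) ≤ α (m+1) := by
        rw [hαrec m hkn]; exact le_max_right _ _
      have h2 : α m < α (m+1) := by
        have := hs (a m); have := ht (a m) (a (m+1)); linarith
      rcases Nat.lt_or_ge j m with h | h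
      · exact lt_trans (ih (by omega) j h) h2
      · have : j = m := by omega
        subst this; exact h2
  constructor
  · rintro ⟨hfi, hil⟩
    rcases hnov₂ i hi1 hin with h | h | h
    · exact h
    · exfalso
      rcases eq_or_lt_of_le hfi with heq | hlt
      · rw [heq] at hfS
        have := hwin i hi1 hin
        linarith
      · have h1 : swl ≤ α f := le_trans hfS (hfeas f hf1 hfn).1
        have h2 : α f < α i := hmono i hin f hlt
        have h3 : α i ≤ wE (a i) := (hfeas i hi1 hin).2
        linarith
    · exfalso
      rcases eq_or_lt_of_le hil with heq | hlt
      · rw [← heq] at hlE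
        have := hwin i hi1 hin
        linarith
      · have h1 : α l ≤ wE (a l) := (hfeas l hl1 hln).2
        have h2 : α i < α l := hmono l hln i hlt
        have h3 : wS (a i) ≤ α i := (hfeas i hi1 hin).1
        linarith
  · rintro ⟨h1, h2⟩
    exact ⟨hfmin ⟨hi1, hin, le_of_eq h1.symm, le_of_eq h2⟩,
           hlmax ⟨hi1, hin, le_of_eq h1.symm, le_of_eq h2⟩⟩
end
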